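/- arXiv:1004.3659 — 2 statements merged into one kernel-verified Lean document; each statement's English description precedes it below -/
import Mathlib

section
/- In the adding-candidates construction for constructive control (with spoiler candidates B from a graph G, qualified candidates {c,w} ∪ X ∪ Y ∪ Z with ‖X‖ = n−1, ‖Y‖ = n−2, ‖Z‖ = n−1, and the 2n+1 voters as specified), before adding any spoiler candidates, c is the unique fallback voting winner of the election (C−B, V): c and w are the only candidates with a strict majority of approvals, both first attaining strict majority at level n, with level-n scores 2n for c and n+1 for w. -/
/- Fallback voting framework.  A ballot is the linearly ordered list of a voter's
approved candidates (most preferred first); an election is a list of ballots. -/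
namespace FV

variable {α : Type*} [DecidableEq α]

/-- The level-`i` score of candidate `c`: the number of voters who approve `c`
and rank `c` among their top `i` approved candidates. -/
def levelScore (V : List (List α)) (i : ℕ) (c : α) : ℕ :=
  (V.filter (fun b => decide (c ∈ b.take i))).length

/-- The overall approval score of candidate `c`. -/
def score (V : List (List α)) (c : α) : ℕ :=
  (V.filter (fun b => decide (c ∈ b))).length

/-- `c` has a strict majority of approvals at level `i`. -/
def MajAt (V : List (List α)) (i : ℕ) (c : α) : Prop :=
  2 * levelScore V i c > V.length

/-- `c` is a fallback voting winner of the election with candidate set `Cs`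
and voter list `V`:  either at the first level (up to `‖Cs‖`) at which some
candidate attains a strict majority, `c` has a strict majority and maximal
level score among strict-majority candidates; or no candidate ever attains a
strict majority and `c` has maximal overall approval score. -/
def FVWinner (Cs : Finset α) (V : List (List α)) (c : α) : Prop :=
  c ∈ Cs ∧
    ((∃ i, 1 ≤ i ∧ i ≤ Cs.card ∧ MajAt V i c ∧
        (∀ j, j < i → ∀ d ∈ Cs, ¬ MajAt V j d) ∧
        (∀ d ∈ Cs, MajAt V i d → levelScore V i d ≤ levelScore V i c)) ∨
     ((∀ i, i ≤ Cs.card → ∀ d ∈ Cs, ¬ MajAt V i d) ∧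
        ∀ d ∈ Cs, score V d ≤ score V c))

/-- `c` is the unique fallback voting winner. -/
def UniqueFVWinner (Cs : Finset α) (V : List (List α)) (c : α) : Prop :=
  FVWinner Cs V c ∧ ∀ d, FVWinner Cs V d → d = c

end FV

/- The adding-candidates constructive construction before any spoiler is
added: qualified candidates `{c,w} ∪ X ∪ Y ∪ Z` with `‖X‖ = n-1`,
`‖Y‖ = n-2`, `‖Z‖ = n-1`, and `2n+1` voters: `n` voters approving `X` then
`c`; `n` voters approving `Y` then `c` then `w`; one voter approving `Z`
then `w`.  (Vertex candidates are present in the type but removed from the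
candidate set.) -/
namespace AC

abbrev Cand (n : ℕ) :=
  Sum (Fin n) (Sum (Fin (n - 1)) (Sum (Fin (n - 2)) (Sum (Fin (n - 1)) Bool)))

def bC {n : ℕ} (b : Fin n) : Cand n := Sum.inl b
def xC {n : ℕ} (j : Fin (n - 1)) : Cand n := Sum.inr (Sum.inl j)
def yC {n : ℕ} (j : Fin (n - 2)) : Cand n := Sum.inr (Sum.inr (Sum.inl j))
def zC {n : ℕ} (j : Fin (n - 1)) : Cand n := Sum.inr (Sum.inr (Sum.inr (Sum.inl j)))
def cC (n : ℕ) : Cand n := Sum.inr (Sum.inr (Sum.inr (Sum.inr false)))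
def wC (n : ℕ) : Cand n := Sum.inr (Sum.inr (Sum.inr (Sum.inr true)))

def Xlist (n : ℕ) : List (Cand n) := (List.finRange (n - 1)).map xC
def Ylist (n : ℕ) : List (Cand n) := (List.finRange (n - 2)).map yC
def Zlist (n : ℕ) : List (Cand n) := (List.finRange (n - 1)).map zC

/-- The `2n+1` voters of the election `(C−B, V)` (no spoilers added). -/
def election0 (n : ℕ) : List (List (Cand n)) :=
  List.replicate n (Xlist n ++ [cC n]) ++
    List.replicate n (Ylist n ++ [cC n, wC n]) ++
    [Zlist n ++ [wC n]]

/-- The qualified candidate set `C − B`. -/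
def candSet0 (n : ℕ) : Finset (Cand n) :=
  Finset.univ \ (Finset.univ.image (bC (n := n)))

end AC

/-!
Only `c` and `w` are ranked by more than one of the three kinds of ballot, so every other
candidate has at most `n` of the `2n+1` approvals and never reaches a strict majority.
The candidate `c` is the last entry of the `n` ballots `X c` and sits just before `w` in the
`n` ballots `Y c w`, so both `c` and `w` first reach a majority at level `n`, where `c`
scores `2n` against `n+1` for `w`.
-/

theorem List.mem_take_append_cons_iff {α : Type*} [DecidableEq α] {L R : List α} {a : α}
    (ha : a ∉ L) (i : ℕ) : a ∈ (L ++ a :: R).take i ↔ L.length < i := by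
  rw [List.mem_take_iff_idxOf_lt (by simp), List.idxOf_append_of_notMem ha, List.idxOf_cons_self,
    add_zero]

namespace FV

variable {α : Type*} [DecidableEq α]

@[simp]
theorem levelScore_append (V W : List (List α)) (i : ℕ) (c : α) :
    levelScore (V ++ W) i c = levelScore V i c + levelScore W i c := by
  simp [levelScore, List.filter_append]

@[simp]
theorem levelScore_replicate (k : ℕ) (b : List α) (i : ℕ) (c : α) :
    levelScore (List.replicate k b) i c = if c ∈ b.take i then k else 0 := by
  by_cases h : c ∈ b.take i <;> simp [levelScore, h]

@[simp]
theorem levelScore_singleton (b : List α) (i : ℕ) (c : α) :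
    levelScore [b] i c = if c ∈ b.take i then 1 else 0 := by
  simpa using levelScore_replicate 1 b i c

@[simp]
theorem score_append (V W : List (List α)) (c : α) :
    score (V ++ W) c = score V c + score W c := by
  simp [score, List.filter_append]

@[simp]
theorem score_replicate (k : ℕ) (b : List α) (c : α) :
    score (List.replicate k b) c = if c ∈ b then k else 0 := by
  by_cases h : c ∈ b <;> simp [score, h]

@[simp]
theorem score_singleton (b : List α) (c : α) : score [b] c = if c ∈ b then 1 else 0 := by
  simpa using score_replicate 1 b c

theorem levelScore_le_score (V : List (List α)) (i : ℕ) (c : α) :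
    levelScore V i c ≤ score V c :=
  (List.monotone_filter_right V fun b hb => by
    simpa using List.mem_of_mem_take (of_decide_eq_true hb)).length_le

theorem uniqueFVWinner_of_first_majority_level {Cs : Finset α} {V : List (List α)} {c : α}
    {i : ℕ} (hc : c ∈ Cs) (hi : 1 ≤ i) (hiCs : i ≤ Cs.card) (hmaj : MajAt V i c)
    (hfirst : ∀ j < i, ∀ d ∈ Cs, ¬ MajAt V j d)
    (hbest : ∀ d ∈ Cs, d ≠ c → MajAt V i d → levelScore V i d < levelScore V i c) :
    UniqueFVWinner Cs V c := by
  refine ⟨⟨hc, Or.inl ⟨i, hi, hiCs, hmaj, hfirst, fun d hd hdmaj => ?_⟩⟩, ?_⟩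
  · rcases eq_or_ne d c with rfl | hdc
    · exact le_rfl
    · exact (hbest d hd hdc hdmaj).le
  rintro d ⟨hd, ⟨i', -, -, hdmaj, hfirst', hbest'⟩ | ⟨hnone, -⟩⟩
  · have hi' : i' = i := le_antisymm
      (not_lt.1 fun h => hfirst' i h c hc hmaj) (not_lt.1 fun h => hfirst i' h d hd hdmaj)
    subst hi'
    by_contra hdc
    exact (hbest d hd hdc hdmaj).not_ge (hbest' c hc hmaj)
  · exact absurd hmaj (hnone i hiCs c hc)

end FV

namespace AC

open FV

variable {n : ℕ}

theorem bC_injective : Function.Injective (bC (n := n)) := fun _ _ => Sum.inl.inj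

@[simp] theorem length_Xlist : (Xlist n).length = n - 1 := by simp [Xlist]
@[simp] theorem length_Ylist : (Ylist n).length = n - 2 := by simp [Ylist]
@[simp] theorem length_Zlist : (Zlist n).length = n - 1 := by simp [Zlist]

theorem card_candSet0 (hn : 2 ≤ n) : (candSet0 n).card = 3 * n - 2 := by
  rw [candSet0, Finset.card_sdiff_of_subset (Finset.subset_univ _), Finset.card_univ,
    Finset.card_image_of_injective _ bC_injective]
  simp only [Cand, Fintype.card_sum, Fintype.card_fin, Fintype.card_bool, Finset.card_univ]
  omega

theorem cC_mem_candSet0 : cC n ∈ candSet0 n := by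
  simp [candSet0, cC, bC]

theorem levelScore_election0_cC (i : ℕ) :
    levelScore (election0 n) i (cC n) =
      (if n - 1 < i then n else 0) + (if n - 2 < i then n else 0) := by
  have h1 : cC n ∈ (Xlist n ++ [cC n]).take i ↔ n - 1 < i := by
    rw [List.mem_take_append_cons_iff (by simp [Xlist, xC, cC]), length_Xlist]
  have h2 : cC n ∈ (Ylist n ++ [cC n, wC n]).take i ↔ n - 2 < i := by
    rw [List.mem_take_append_cons_iff (by simp [Ylist, yC, cC]), length_Ylist]
  have h3 : cC n ∉ (Zlist n ++ [wC n]).take i := fun h => by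
    simpa [Zlist, zC, cC, wC] using List.mem_of_mem_take h
  simp only [election0, levelScore_append, levelScore_replicate, levelScore_singleton, h1, h2,
    h3, if_false, add_zero]

theorem levelScore_election0_wC (hn : 2 ≤ n) (i : ℕ) :
    levelScore (election0 n) i (wC n) = if n - 1 < i then n + 1 else 0 := by
  have h1 : wC n ∉ (Xlist n ++ [cC n]).take i := fun h => by
    simpa [Xlist, xC, cC, wC] using List.mem_of_mem_take h
  have h2 : wC n ∈ (Ylist n ++ [cC n, wC n]).take i ↔ n - 1 < i := by
    rw [← List.singleton_append, ← List.append_assoc,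
      List.mem_take_append_cons_iff (by simp [Ylist, yC, cC, wC])]
    simp only [List.length_append, length_Ylist, List.length_singleton]
    omega
  have h3 : wC n ∈ (Zlist n ++ [wC n]).take i ↔ n - 1 < i := by
    rw [List.mem_take_append_cons_iff (by simp [Zlist, zC, wC]), length_Zlist]
  simp only [election0, levelScore_append, levelScore_replicate, levelScore_singleton, h1, h2,
    h3, if_false, zero_add]
  split_ifs <;> rfl

theorem score_election0_le_of_ne {d : Cand n} (hc : d ≠ cC n) (hw : d ≠ wC n) :
    score (election0 n) d ≤ n := by
  simp only [election0, score_append, score_replicate, score_singleton]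
  rcases d with b | x | y | z | _ | _ <;> simp_all [Xlist, Ylist, Zlist, xC, yC, zC, cC, wC]
  exact z.pos.trans_le (Nat.sub_le n 1)

theorem length_election0 : (election0 n).length = 2 * n + 1 := by
  simp only [election0, List.length_append, List.length_replicate, List.length_singleton]
  ring

theorem majAt_election0_iff (hn : 2 ≤ n) (i : ℕ) (d : Cand n) :
    MajAt (election0 n) i d ↔ (d = cC n ∨ d = wC n) ∧ n ≤ i := by
  rw [MajAt, length_election0]
  by_cases hc : d = cC n
  · subst hc
    rw [levelScore_election0_cC]
    split_ifs <;> simp only [true_or, true_and] <;> omega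
  by_cases hw : d = wC n
  · subst hw
    rw [levelScore_election0_wC hn]
    split_ifs <;> simp only [or_true, true_and] <;> omega
  have := (levelScore_le_score _ i d).trans (score_election0_le_of_ne hc hw)
  simp only [hc, hw, or_self, false_and, iff_false]
  omega

end AC

/-- before adding any spoiler candidates, `c` is the unique
fallback winner of `(C−B, V)`: `c` and `w` are the only candidates ever
attaining a strict majority, both first attain it at level `n`, and their
level-`n` scores are `2n` and `n+1` respectively. -/
theorem fv_adding_candidates_initial_election {n : ℕ} (hn : 3 ≤ n) :
    FV.UniqueFVWinner (AC.candSet0 n) (AC.election0 n) (AC.cC n) ∧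
    (∀ d ∈ AC.candSet0 n, (∃ i, FV.MajAt (AC.election0 n) i d) →
      d = AC.cC n ∨ d = AC.wC n) ∧
    FV.MajAt (AC.election0 n) n (AC.cC n) ∧
    FV.MajAt (AC.election0 n) n (AC.wC n) ∧
    (∀ j, j < n → ¬ FV.MajAt (AC.election0 n) j (AC.cC n) ∧
      ¬ FV.MajAt (AC.election0 n) j (AC.wC n)) ∧
    FV.levelScore (AC.election0 n) n (AC.cC n) = 2 * n ∧
    FV.levelScore (AC.election0 n) n (AC.wC n) = n + 1 := by
  open AC FV in
  have hmaj := majAt_election0_iff (n := n) (by omega)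
  have hc_maj : MajAt (election0 n) n (cC n) := (hmaj n _).2 ⟨.inl rfl, le_rfl⟩
  have hw_maj : MajAt (election0 n) n (wC n) := (hmaj n _).2 ⟨.inr rfl, le_rfl⟩
  have hnone (j : ℕ) (hj : j < n) (d : Cand n) : ¬ MajAt (election0 n) j d :=
    fun h => absurd ((hmaj j d).1 h).2 (by omega)
  have hc_score : levelScore (election0 n) n (cC n) = 2 * n := by
    rw [levelScore_election0_cC]
    split_ifs <;> omega
  have hw_score : levelScore (election0 n) n (wC n) = n + 1 := by
    rw [levelScore_election0_wC (by omega)]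
    split_ifs <;> omega
  refine ⟨?_, fun d _ ⟨i, hi⟩ => ((hmaj i d).1 hi).1, hc_maj, hw_maj,
    fun j hj => ⟨hnone j hj _, hnone j hj _⟩, hc_score, hw_score⟩
  refine uniqueFVWinner_of_first_majority_level cC_mem_candSet0 (by omega)
    (by rw [card_candSet0 (by omega)]; omega) hc_maj (fun j hj d _ => hnone j hj d) ?_
  intro d _ hdc hd_maj
  obtain ⟨rfl | rfl, -⟩ := (hmaj n d).1 hd_maj
  · exact (hdc rfl).elim
  · omega
end

section
/- Let G = (B,E) be a graph on n vertices and k a positive integer. Consider the election with candidates C = B ∪ {w} and 2n+k voters: for each i ≤ n a voter v_i approving N_c[b_i]; for each i ≤ n a voter approving B − N_c[b_i] then w; and k voters approving nothing. Then G has a dominating set of size at most k if and only if w can be made the unique fallback voting winner by deleting at most k voters. -/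
/- The deleting-voters construction.  Candidates are `Option (Fin n)`:
`some b` is the vertex candidate for `b` and `none` is the distinguished
candidate `w`.  For each `i`, voter `vᵢ` approves the candidates of
`N_c[bᵢ]` (enumerated by `M i`); for each `i` there is a voter approving
`B − N_c[bᵢ]` (enumerated by `L i`) followed by `w`; and there are `k`
voters approving nothing. -/
namespace DV

/-- The ballot of voter `vᵢ`, approving `N_c[bᵢ]`. -/
def vballot {n : ℕ} (M : Fin n → List (Fin n)) (i : Fin n) : List (Option (Fin n)) :=
  (M i).map some

/-- The ballot approving `B − N_c[bᵢ]` and then `w`. -/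
def wballot {n : ℕ} (L : Fin n → List (Fin n)) (i : Fin n) : List (Option (Fin n)) :=
  (L i).map some ++ [none]

/-- The full voter list of the construction. -/
def delElection {n : ℕ} (k : ℕ) (M L : Fin n → List (Fin n)) :
    List (List (Option (Fin n))) :=
  (List.finRange n).map (vballot M) ++ (List.finRange n).map (wballot L) ++
    List.replicate k ([] : List (Option (Fin n)))

/-- The voter list obtained by deleting exactly the voters `vᵢ` for `i ∈ B'`. -/
def delElectionMinus {n : ℕ} (k : ℕ) (M L : Fin n → List (Fin n))
    (B' : Finset (Fin n)) : List (List (Option (Fin n))) :=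
  ((List.finRange n).filter (fun i => decide (i ∉ B'))).map (vballot M) ++
    (List.finRange n).map (wballot L) ++
    List.replicate k ([] : List (Option (Fin n)))

end DV

/-!
Before any deletion every candidate has approval score `n`, and nobody can reach a strict
majority while at least `2n` voters remain. Deleting the voters `vᵢ` for `i` in a dominating
set costs every vertex candidate at least one approval while `w` keeps `n`, so `w` wins alone
on approval score. Conversely, if `w` is the unique winner after at most `k` deletions, it has
no majority and so must beat every vertex candidate on approval score. A vertex `b` none of
whose closed-neighbourhood voters `vᵢ` was deleted would lose at most one approval per deleted
`w`-voter, as does `w`, and so would tie with `w`; hence the deleted `vᵢ` dominate `G`.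
-/

namespace List

variable {α : Type*}

theorem Sublist.countP_lt_countP {l₁ l₂ : List α} {p : α → Bool} (h : l₁ <+ l₂) {x : α}
    (hx₂ : x ∈ l₂) (hx₁ : x ∉ l₁) (hpx : p x) : l₁.countP p < l₂.countP p := by
  simp only [countP_eq_length_filter]
  refine lt_of_le_of_ne (h.filter p).length_le fun hlen => hx₁ ?_
  have hx : x ∈ l₂.filter p := mem_filter.mpr ⟨hx₂, hpx⟩
  rw [← (h.filter p).eq_of_length hlen] at hx
  exact mem_of_mem_filter hx

theorem Nodup.countP_le_countP {l₁ l₂ : List α} {p : α → Bool} (h : l₁.Nodup)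
    (hsub : ∀ x ∈ l₁, p x → x ∈ l₂) : l₁.countP p ≤ l₂.countP p := by
  simp only [countP_eq_length_filter]
  refine ((h.filter p).subperm fun x hx => ?_).length_le
  obtain ⟨hx, hpx⟩ := mem_filter.mp hx
  exact mem_filter.mpr ⟨hsub x hx hpx, hpx⟩

theorem Nodup.countP_mem_le_card [DecidableEq α] {l : List α} (h : l.Nodup) (s : Finset α) :
    l.countP (· ∈ s) ≤ s.card := by
  rw [countP_eq_length_filter, ← toFinset_card_of_nodup (h.filter _)]
  exact Finset.card_le_card fun x hx => by
    simp only [mem_toFinset, mem_filter, decide_eq_true_eq] at hx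
    exact hx.2

end List

namespace FV

variable {α : Type*} [DecidableEq α]

theorem not_majAt_of_two_mul_score_le {V : List (List α)} {c : α}
    (h : 2 * score V c ≤ V.length) (i : ℕ) : ¬ MajAt V i c := by
  have := levelScore_le_score V i c
  unfold MajAt
  omega

theorem uniqueFVWinner_of_forall_not_majAt {Cs : Finset α} {V : List (List α)} {c : α}
    (hmaj : ∀ i, ∀ d ∈ Cs, ¬ MajAt V i d) (hc : c ∈ Cs)
    (hlt : ∀ d ∈ Cs, d ≠ c → score V d < score V c) : UniqueFVWinner Cs V c := by
  refine ⟨⟨hc, Or.inr ⟨fun i _ => hmaj i, fun d hd => ?_⟩⟩, ?_⟩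
  · rcases eq_or_ne d c with rfl | hne
    · exact le_rfl
    · exact (hlt d hd hne).le
  · rintro d ⟨hd, ⟨i, -, -, hdi, -⟩ | ⟨-, hmax⟩⟩
    · exact absurd hdi (hmaj i d hd)
    · by_contra hne
      exact absurd (hmax c hc) (hlt d hd hne).not_ge

/-- Without a majority for `c`, it wins by approval score, so anyone matching its score wins
too. -/
theorem UniqueFVWinner.score_lt {Cs : Finset α} {V : List (List α)} {c d : α}
    (h : UniqueFVWinner Cs V c) (hmaj : ∀ i, ¬ MajAt V i c) (hd : d ∈ Cs) (hne : d ≠ c) :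
    score V d < score V c := by
  obtain ⟨⟨-, ⟨i, -, -, hci, -⟩ | ⟨hno, hmax⟩⟩, huniq⟩ := h
  · exact absurd hci (hmaj i)
  · by_contra! hle
    exact hne (huniq d ⟨hd, Or.inr ⟨hno, fun d' hd' => (hmax d' hd').trans hle⟩⟩)

end FV

namespace DV

open FV

variable {n : ℕ} (M L : Fin n → List (Fin n))

def subElection (s t : List (Fin n)) (e : ℕ) : List (List (Option (Fin n))) :=
  s.map (vballot M) ++ t.map (wballot L) ++ List.replicate e []

theorem length_subElection (s t : List (Fin n)) (e : ℕ) :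
    (subElection M L s t e).length = s.length + t.length + e := by
  simp [subElection, Nat.add_assoc]

theorem score_subElection_none (s t : List (Fin n)) (e : ℕ) :
    score (subElection M L s t e) none = t.length := by
  simp [subElection, score, vballot, wballot, List.filter_map, Function.comp_def]

theorem score_subElection_some (s t : List (Fin n)) (e : ℕ) (u : Fin n) :
    score (subElection M L s t e) (some u) =
      s.countP (fun i => u ∈ M i) + t.countP (fun i => u ∈ L i) := by
  simp [subElection, score, vballot, wballot, List.filter_map, Function.comp_def,
    List.countP_eq_length_filter]

theorem sublist_delElection_iff {k : ℕ} {V : List (List (Option (Fin n)))} :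
    V.Sublist (delElection k M L) ↔ ∃ s t e, s.Sublist (List.finRange n) ∧
      t.Sublist (List.finRange n) ∧ e ≤ k ∧
      V = subElection M L s t e := by
  constructor
  · intro h
    obtain ⟨VW, E, rfl, hVW, hE⟩ := List.sublist_append_iff.mp h
    obtain ⟨V, W, rfl, hV, hW⟩ := List.sublist_append_iff.mp hVW
    obtain ⟨s, hs, rfl⟩ := List.sublist_map_iff.mp hV
    obtain ⟨t, ht, rfl⟩ := List.sublist_map_iff.mp hW
    obtain ⟨e, he, rfl⟩ := List.sublist_replicate_iff.mp hE
    exact ⟨s, t, e, hs, ht, he, rfl⟩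
  · rintro ⟨s, t, e, hs, ht, he, rfl⟩
    exact ((hs.map _).append (ht.map _)).append ((List.replicate_sublist_replicate _).mpr he)

variable {M L} (hML : ∀ i u, u ∈ L i ↔ u ∉ M i)
include hML

theorem score_subElection_some_lt {s : List (Fin n)} (hs : s.Sublist (List.finRange n))
    {u v : Fin n} (hv : v ∉ s) (huv : u ∈ M v) (e : ℕ) :
    score (subElection M L s (List.finRange n) e) (some u) < n := by
  have hM := hs.countP_lt_countP (List.mem_finRange v) hv (p := fun i => u ∈ M i)
    (decide_eq_true huv)
  have hsplit := List.length_eq_countP_add_countP (fun i => decide (u ∈ M i))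
    (l := List.finRange n)
  have hL : (List.finRange n).countP (fun i => u ∈ L i) =
      (List.finRange n).countP (fun i => ¬ decide (u ∈ M i)) :=
    List.countP_congr fun i _ => by simp [hML]
  rw [List.length_finRange] at hsplit
  rw [score_subElection_some]
  omega

theorem length_le_score_subElection_some {s t : List (Fin n)} (ht : t.Nodup) {u : Fin n}
    (hu : ∀ i, u ∈ M i → i ∈ s) (e : ℕ) :
    t.length ≤ score (subElection M L s t e) (some u) := by
  have hM : t.countP (fun i => u ∈ M i) ≤ s.countP (fun i => u ∈ M i) :=
    ht.countP_le_countP fun i _ hi => hu i (of_decide_eq_true hi)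
  have hL : t.countP (fun i => u ∈ L i) = t.countP (fun i => ¬ decide (u ∈ M i)) :=
    List.countP_congr fun i _ => by simp [hML]
  rw [score_subElection_some, List.length_eq_countP_add_countP (fun i => decide (u ∈ M i))]
  omega

theorem exists_uniqueFVWinner_of_dominating {k : ℕ} {B' : Finset (Fin n)} (hB' : B'.card ≤ k)
    (hdom : ∀ u, ∃ v ∈ B', u ∈ M v) :
    ∃ V', V'.Sublist (delElection k M L) ∧ (delElection k M L).length ≤ V'.length + k ∧
      UniqueFVWinner Finset.univ V' none := by
  set s := (List.finRange n).filter (fun i => decide (i ∉ B'))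
  have hs : s.Sublist (List.finRange n) := List.filter_sublist
  have hlen : n ≤ s.length + k := by
    have := (List.nodup_finRange n).countP_mem_le_card B'
    have hsplit := List.length_eq_countP_add_countP (· ∈ B') (l := List.finRange n)
    simp only [decide_eq_true_eq, List.length_finRange] at hsplit
    simp only [s, ← List.countP_eq_length_filter]
    omega
  have hV : delElectionMinus k M L B' = subElection M L s (List.finRange n) k := rfl
  refine ⟨delElectionMinus k M L B', (sublist_delElection_iff M L).mpr
    ⟨s, _, k, hs, List.Sublist.refl _, le_rfl, hV⟩, ?_, ?_⟩
  · rw [hV, length_subElection, delElection, ← subElection, length_subElection]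
    simp only [List.length_finRange]
    omega
  have hw : score (delElectionMinus k M L B') none = n := by
    rw [hV, score_subElection_none, List.length_finRange]
  have hlt : ∀ u, score (delElectionMinus k M L B') (some u) < n := fun u => by
    obtain ⟨v, hv, huv⟩ := hdom u
    exact hV ▸ score_subElection_some_lt hML hs (by simp [s, hv]) huv k
  have hlenV : (delElectionMinus k M L B').length = s.length + n + k := by
    rw [hV, length_subElection, List.length_finRange]
  refine uniqueFVWinner_of_forall_not_majAt (fun i d _ => not_majAt_of_two_mul_score_le ?_ i)
    (Finset.mem_univ _) ?_
  · rcases d with _ | u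
    · omega
    · have := hlt u
      omega
  · rintro (_ | u) _ hne
    · exact absurd rfl hne
    · exact (hlt u).trans_eq hw.symm

theorem exists_dominating_of_uniqueFVWinner {k : ℕ} {V' : List (List (Option (Fin n)))}
    (hsub : V'.Sublist (delElection k M L)) (hlen : (delElection k M L).length ≤ V'.length + k)
    (hwin : UniqueFVWinner Finset.univ V' none) :
    ∃ B' : Finset (Fin n), B'.card ≤ k ∧ ∀ u, ∃ v ∈ B', u ∈ M v := by
  obtain ⟨s, t, e, hs, ht, he, rfl⟩ := (sublist_delElection_iff M L).mp hsub
  have hsn := hs.length_le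
  have htn := ht.length_le
  rw [delElection, ← subElection, length_subElection, length_subElection] at hlen
  simp only [List.length_finRange] at hlen hsn htn
  have hwmaj : ∀ i, ¬ MajAt (subElection M L s t e) i none :=
    not_majAt_of_two_mul_score_le (by rw [score_subElection_none, length_subElection]; omega)
  refine ⟨Finset.univ \ s.toFinset, ?_, fun u => ?_⟩
  · rw [Finset.card_sdiff_of_subset (Finset.subset_univ _), Finset.card_univ, Fintype.card_fin,
      List.toFinset_card_of_nodup (hs.nodup (List.nodup_finRange n))]
    omega
  · by_contra! hu
    have hnbr : ∀ i, u ∈ M i → i ∈ s := fun i hi => by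
      by_contra h
      exact hu i (by simpa using h) hi
    have hge := length_le_score_subElection_some hML (ht.nodup (List.nodup_finRange n)) hnbr e
    have hlt := hwin.score_lt hwmaj (Finset.mem_univ (some u)) (Option.some_ne_none u)
    rw [score_subElection_none] at hlt
    omega

end DV

theorem fv_constructive_deleting_voters_general {n k : ℕ}
    (G : SimpleGraph (Fin n))
    (M L : Fin n → List (Fin n))
    (hMmem : ∀ i b, b ∈ M i ↔ (b = i ∨ G.Adj i b))
    (hLmem : ∀ i b, b ∈ L i ↔ ¬ (b = i ∨ G.Adj i b)) :
    (∃ B' : Finset (Fin n), B'.card ≤ k ∧ ∀ u, ∃ v ∈ B', u = v ∨ G.Adj v u) ↔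
    (∃ V' : List (List (Option (Fin n))), V'.Sublist (DV.delElection k M L) ∧
      (DV.delElection k M L).length ≤ V'.length + k ∧
      FV.UniqueFVWinner Finset.univ V' (none : Option (Fin n))) := by
  have hML : ∀ i u, u ∈ L i ↔ u ∉ M i := fun i u => by rw [hLmem, hMmem]
  constructor
  · rintro ⟨B', hB', hdom⟩
    refine DV.exists_uniqueFVWinner_of_dominating hML hB' fun u => ?_
    obtain ⟨v, hv, huv⟩ := hdom u
    exact ⟨v, hv, (hMmem v u).mpr huv⟩
  · rintro ⟨V', hsub, hlen, hwin⟩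
    obtain ⟨B', hB', hdom⟩ := DV.exists_dominating_of_uniqueFVWinner hML hsub hlen hwin
    refine ⟨B', hB', fun u => ?_⟩
    obtain ⟨v, hv, huv⟩ := hdom u
    exact ⟨v, hv, (hMmem v u).mp huv⟩

/-- `G` has a dominating set of size at most `k` iff `w` can be
made the unique fallback voting winner by deleting at most `k` voters.  Here
`M i` enumerates `N_c[bᵢ]` and `L i` enumerates `B − N_c[bᵢ]`. -/
theorem fv_constructive_deleting_voters {n k : ℕ} (hk : 0 < k)
    (G : SimpleGraph (Fin n)) [DecidableRel G.Adj]
    (M L : Fin n → List (Fin n))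
    (hMnd : ∀ i, (M i).Nodup) (hLnd : ∀ i, (L i).Nodup)
    (hMmem : ∀ i b, b ∈ M i ↔ (b = i ∨ G.Adj i b))
    (hLmem : ∀ i b, b ∈ L i ↔ ¬ (b = i ∨ G.Adj i b)) :
    (∃ B' : Finset (Fin n), B'.card ≤ k ∧ ∀ u, ∃ v ∈ B', u = v ∨ G.Adj v u) ↔
    (∃ V' : List (List (Option (Fin n))), V'.Sublist (DV.delElection k M L) ∧
      (DV.delElection k M L).length ≤ V'.length + k ∧
      FV.UniqueFVWinner Finset.univ V' (none : Option (Fin n))) :=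
  fv_constructive_deleting_voters_general G M L hMmem hLmem
end
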